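/- arXiv:2409.19477 — 2 statements merged into one kernel-verified Lean document; each statement's English description precedes it below -/
import Mathlib

section
/- For every x ≥ 0, Φ(x) ≥ 1/(1 + exp(−√(8/π)·x)); equivalently, for every q ∈ [1/2, 1), Φ⁻¹(q) ≤ √(π/8)·log(q/(1 − q)). -/
noncomputable section

/-- The standard normal probability density function. -/
def stdPhiPDF (x : ℝ) : ℝ := (Real.sqrt (2 * Real.pi))⁻¹ * Real.exp (-x ^ 2 / 2)

/-- The standard normal cumulative distribution function. -/
def stdPhiCDF (x : ℝ) : ℝ := ∫ t in Set.Iic x, stdPhiPDF t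

namespace NCL

open Real MeasureTheory Set Filter Topology

def c : ℝ := Real.sqrt (8 / Real.pi)

lemma pi_pos' : (0:ℝ) < Real.pi := Real.pi_pos

lemma c_pos : 0 < c := Real.sqrt_pos.2 (by positivity)

lemma sqrt2pi_pos : 0 < Real.sqrt (2 * Real.pi) := Real.sqrt_pos.2 (by positivity)

lemma c_mul_sqrt : Real.sqrt (2 * Real.pi) * c = 4 := by
  rw [c, ← Real.sqrt_mul (by positivity)]
  rw [show (2 * Real.pi) * (8 / Real.pi) = 16 by field_simp; ring]
  rw [show (16:ℝ) = 4 ^ 2 by norm_num, Real.sqrt_sq (by norm_num)]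

def E (t : ℝ) : ℝ := Real.exp (-c * t)

lemma E_pos (t : ℝ) : 0 < E t := Real.exp_pos _

lemma oE_pos (t : ℝ) : 0 < 1 + E t := by have := E_pos t; linarith

lemma hasDerivAt_E (t : ℝ) : HasDerivAt E (-c * E t) t := by
  have h1 : HasDerivAt (fun t : ℝ => -c * t) (-c) t := by
    simpa using (hasDerivAt_id t).const_mul (-c)
  have h2 := h1.exp
  rw [show -c * E t = Real.exp (-c * t) * (-c) by rw [E]; ring]
  exact h2

def L (t : ℝ) : ℝ := 1 / (1 + E t)

def hfun (t : ℝ) : ℝ := c * E t / (1 + E t) ^ 2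

lemma hfun_nonneg (t : ℝ) : 0 ≤ hfun t := by
  have h1 := c_pos; have h2 := E_pos t; have h3 := oE_pos t
  rw [hfun]; positivity

lemma hasDerivAt_L (t : ℝ) : HasDerivAt L (hfun t) t := by
  have h2 : HasDerivAt (fun t => 1 + E t) (-c * E t) t := (hasDerivAt_E t).const_add 1
  have h3 := h2.inv (ne_of_gt (oE_pos t))
  have : L = fun t => (1 + E t)⁻¹ := by funext t; rw [L, one_div]
  rw [this, hfun]
  exact h3.congr_deriv (by field_simp)

lemma continuous_E : Continuous E := by unfold E; fun_prop

lemma continuous_hfun : Continuous hfun :=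
  (continuous_const.mul continuous_E).div
    ((continuous_const.add continuous_E).pow 2) (fun t => by have := oE_pos t; positivity)

def A (t : ℝ) : ℝ := -t ^ 2 / 2 - Real.log (Real.sqrt (2 * Real.pi))
def B (t : ℝ) : ℝ := Real.log c - c * t - 2 * Real.log (1 + E t)
def g (t : ℝ) : ℝ := A t - B t
def g1 (t : ℝ) : ℝ := -t + c - 2 * c * E t / (1 + E t)
def g2 (t : ℝ) : ℝ := -1 + 2 * c ^ 2 * E t / (1 + E t) ^ 2

lemma phi_eq (t : ℝ) : stdPhiPDF t = Real.exp (A t) := by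
  rw [stdPhiPDF, A, Real.exp_sub, Real.exp_log sqrt2pi_pos]
  ring

lemma h_eq (t : ℝ) : hfun t = Real.exp (B t) := by
  have h1 : (2:ℝ) * Real.log (1 + E t) = Real.log ((1 + E t) ^ 2) := by
    rw [Real.log_pow]; push_cast; ring
  rw [hfun, B, h1, Real.exp_sub, Real.exp_sub, Real.exp_log c_pos,
    Real.exp_log (by have := oE_pos t; positivity), E, neg_mul, Real.exp_neg]
  ring

lemma d_lt_iff (t : ℝ) : stdPhiPDF t < hfun t ↔ g t < 0 := by
  rw [phi_eq, h_eq, Real.exp_lt_exp, g, sub_neg]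

lemma d_le_iff (t : ℝ) : stdPhiPDF t ≤ hfun t ↔ g t ≤ 0 := by
  rw [phi_eq, h_eq, Real.exp_le_exp, g, sub_nonpos]

lemma hasDerivAt_g (t : ℝ) : HasDerivAt g (g1 t) t := by
  have hA : HasDerivAt A (-t) t := by
    have := ((hasDerivAt_pow 2 t).neg.div_const 2).sub_const
      (Real.log (Real.sqrt (2 * Real.pi)))
    refine this.congr_deriv ?_
    norm_num; ring
  have hlog : HasDerivAt (fun t => Real.log (1 + E t)) (-c * E t / (1 + E t)) t :=
    ((hasDerivAt_E t).const_add 1).log (ne_of_gt (oE_pos t))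
  have hB : HasDerivAt B (-c - 2 * (-c * E t / (1 + E t))) t := by
    have h1 : HasDerivAt (fun t : ℝ => Real.log c - c * t) (-c) t := by
      simpa using ((hasDerivAt_id t).const_mul c).const_sub (Real.log c)
    exact h1.sub (hlog.const_mul 2)
  have := hA.sub hB
  refine this.congr_deriv ?_
  rw [g1]
  have := oE_pos t
  field_simp
  ring

lemma hasDerivAt_g1 (t : ℝ) : HasDerivAt g1 (g2 t) t := by
  have hq : HasDerivAt (fun t => 2 * c * E t / (1 + E t))
      (((2 * c) * (-c * E t) * (1 + E t) - (2 * c * E t) * (-c * E t)) / (1 + E t) ^ 2) t := by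
    exact (((hasDerivAt_E t).const_mul (2 * c)).div ((hasDerivAt_E t).const_add 1)
      (ne_of_gt (oE_pos t)))
  have h1 : HasDerivAt (fun t : ℝ => -t + c) (-1) t := by
    simpa using (hasDerivAt_id t).neg.add_const c
  have := h1.sub hq
  refine this.congr_deriv ?_
  rw [g2]
  have := oE_pos t
  field_simp
  ring

lemma g1_zero : g1 0 = 0 := by
  have : E 0 = 1 := by rw [E]; norm_num
  rw [g1, this]; ring

lemma g_zero : g 0 = 0 := by
  have hE0 : E 0 = 1 := by rw [E]; norm_num
  have h1 : Real.log (Real.sqrt (2 * Real.pi)) + Real.log c = Real.log 4 := by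
    rw [← Real.log_mul (ne_of_gt sqrt2pi_pos) (ne_of_gt c_pos), c_mul_sqrt]
  have h2 : Real.log (4:ℝ) = 2 * Real.log 2 := by
    rw [show (4:ℝ) = 2 ^ 2 by norm_num, Real.log_pow]; push_cast; ring
  rw [g, A, B, hE0]
  have : (1:ℝ) + 1 = 2 := by norm_num
  rw [this]
  linarith

lemma g2_strict_anti {v u : ℝ} (hv : 0 ≤ v) (hvu : v < u) : g2 u < g2 v := by
  set a := E u with ha'
  set b := E v with hb'
  have ha : 0 < a := E_pos u
  have hb : 0 < b := E_pos v
  have hab : a < b := by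
    rw [ha', hb', E, E]
    exact Real.exp_lt_exp.2 (by nlinarith [c_pos])
  have hb1 : b ≤ 1 := by
    rw [hb', E]
    exact Real.exp_le_one_iff.2 (by nlinarith [c_pos])
  have hab1 : a * b < 1 := by
    calc a * b < 1 * b := by exact mul_lt_mul_of_pos_right (lt_of_lt_of_le hab hb1) hb
    _ = b := one_mul b
    _ ≤ 1 := hb1
  have key : a * (1 + b) ^ 2 < b * (1 + a) ^ 2 := by nlinarith [mul_pos (sub_pos.2 hab) (sub_pos.2 hab1)]
  have h1 : a / (1 + a) ^ 2 < b / (1 + b) ^ 2 := by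
    rw [div_lt_div_iff₀ (by positivity) (by positivity)]
    linarith
  have hc2 : 0 < 2 * c ^ 2 := by have := c_pos; positivity
  rw [g2, g2, ← ha', ← hb', mul_div_assoc, mul_div_assoc]
  have := mul_lt_mul_of_pos_left h1 hc2
  linarith

lemma contOn_g1 (s : Set ℝ) : ContinuousOn g1 s :=
  fun x _ => (hasDerivAt_g1 x).continuousAt.continuousWithinAt

lemma contOn_g (s : Set ℝ) : ContinuousOn g s :=
  fun x _ => (hasDerivAt_g x).continuousAt.continuousWithinAt

lemma sign1 {s t : ℝ} (hs : 0 < s) (hst : s < t) (h : g1 s < 0) : g1 t < 0 := by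
  by_contra hcon
  push_neg at hcon
  obtain ⟨u, hu, hu'⟩ := exists_hasDerivAt_eq_slope g1 g2 hst (contOn_g1 _)
    (fun x _ => hasDerivAt_g1 x)
  obtain ⟨v, hv, hv'⟩ := exists_hasDerivAt_eq_slope g1 g2 hs (contOn_g1 _)
    (fun x _ => hasDerivAt_g1 x)
  have hg2u : 0 < g2 u := by
    rw [hu']; apply div_pos <;> linarith
  have hg2v : g2 v < 0 := by
    rw [hv', g1_zero]
    apply div_neg_of_neg_of_pos <;> linarith
  have := g2_strict_anti (le_of_lt hv.1) (hv.2.trans hu.1)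
  linarith

lemma sign0 {s t : ℝ} (hs : 0 ≤ s) (hst : s ≤ t) (h : g s < 0) : g t ≤ 0 := by
  rcases eq_or_lt_of_le hst with rfl | hst'
  · exact le_of_lt h
  by_contra hcon
  push_neg at hcon
  have hs0 : 0 < s := by
    rcases eq_or_lt_of_le hs with rfl | h' 
    · rw [g_zero] at h; linarith
    · exact h'
  obtain ⟨u, hu, hu'⟩ := exists_hasDerivAt_eq_slope g g1 hst' (contOn_g _)
    (fun x _ => hasDerivAt_g x)
  obtain ⟨v, hv, hv'⟩ := exists_hasDerivAt_eq_slope g g1 hs0 (contOn_g _)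
    (fun x _ => hasDerivAt_g x)
  have hg1u : 0 < g1 u := by
    rw [hu']; apply div_pos <;> linarith
  have hg1v : g1 v < 0 := by
    rw [hv', g_zero]
    apply div_neg_of_neg_of_pos <;> linarith
  exact absurd (sign1 hv.1 (hv.2.trans hu.1) hg1v) (by linarith)

lemma phi_pos (t : ℝ) : 0 < stdPhiPDF t := by
  rw [stdPhiPDF]
  have := sqrt2pi_pos
  positivity

lemma phi_eq' : stdPhiPDF = fun x => (Real.sqrt (2 * Real.pi))⁻¹ * Real.exp (-(1/2) * x ^ 2) := by
  funext x
  rw [stdPhiPDF, show -x ^ 2 / 2 = -(1/2) * x ^ 2 by ring]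

lemma integrable_phi : Integrable stdPhiPDF := by
  rw [phi_eq']
  exact (integrable_exp_neg_mul_sq (by norm_num : (0:ℝ) < 1/2)).const_mul _

lemma int_phi_Ioi : ∫ t in Ioi (0:ℝ), stdPhiPDF t = 1/2 := by
  rw [phi_eq', MeasureTheory.integral_const_mul, integral_gaussian_Ioi,
    show Real.pi / (1/2) = 2 * Real.pi by ring]
  field_simp

lemma int_phi_total : ∫ t, stdPhiPDF t = 1 := by
  rw [phi_eq', MeasureTheory.integral_const_mul, integral_gaussian,
    show Real.pi / (1/2) = 2 * Real.pi by ring]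
  field_simp

lemma cdf_zero : stdPhiCDF 0 = 1/2 := by
  have h := MeasureTheory.integral_add_compl (measurableSet_Ioi (a := (0:ℝ))) integrable_phi
  rw [compl_Ioi, int_phi_Ioi, int_phi_total] at h
  rw [stdPhiCDF]
  linarith

lemma L_zero : L 0 = 1/2 := by
  have : E 0 = 1 := by rw [E]; norm_num
  rw [L, this]; norm_num

lemma tendsto_L : Tendsto L atTop (𝓝 1) := by
  have hct : Tendsto (fun t : ℝ => c * t) atTop atTop :=
    Tendsto.const_mul_atTop c_pos tendsto_id
  have hE : Tendsto E atTop (𝓝 0) := by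
    have h := Real.tendsto_exp_neg_atTop_nhds_zero.comp hct
    have he : E = (fun x => Real.exp (-x)) ∘ fun t : ℝ => c * t := by
      funext t; simp [E, Function.comp, neg_mul]
    rw [he]; exact h
  have h1 : Tendsto (fun t => (1 + E t)⁻¹) atTop (𝓝 ((1 + 0:ℝ)⁻¹)) :=
    (tendsto_const_nhds.add hE).inv₀ (by norm_num)
  have : L = fun t => (1 + E t)⁻¹ := by funext t; rw [L, one_div]
  rw [this]
  convert h1 using 2
  norm_num

lemma int_h_Ioi (a : ℝ) : ∫ t in Ioi a, hfun t = 1 - L a :=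
  MeasureTheory.integral_Ioi_of_hasDerivAt_of_nonneg' (fun x _ => hasDerivAt_L x)
    (fun x _ => hfun_nonneg x) tendsto_L

lemma intOn_h (a : ℝ) : IntegrableOn hfun (Ioi a) :=
  integrableOn_Ioi_deriv_of_nonneg' (fun x _ => hasDerivAt_L x)
    (fun x _ => hfun_nonneg x) tendsto_L

lemma part1 (x : ℝ) (hx : 0 ≤ x) : L x ≤ stdPhiCDF x := by
  have hΦ : stdPhiCDF x - stdPhiCDF 0 = ∫ t in (0:ℝ)..x, stdPhiPDF t := by
    rw [stdPhiCDF, stdPhiCDF]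
    exact intervalIntegral.integral_Iic_sub_Iic (μ := volume) (a := 0) (b := x)
      integrable_phi.integrableOn integrable_phi.integrableOn
  have hL : L x - L 0 = ∫ t in (0:ℝ)..x, hfun t :=
    (intervalIntegral.integral_eq_sub_of_hasDerivAt (fun t _ => hasDerivAt_L t)
      (continuous_hfun.intervalIntegrable 0 x)).symm
  have key : 0 ≤ ∫ t in (0:ℝ)..x, (stdPhiPDF t - hfun t) := by
    by_cases hcase : ∀ t ∈ Icc (0:ℝ) x, hfun t ≤ stdPhiPDF t
    · exact intervalIntegral.integral_nonneg hx (fun u hu => sub_nonneg.2 (hcase u hu))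
    · push_neg at hcase
      obtain ⟨s, hs, hlt⟩ := hcase
      have hgs : g s < 0 := (d_lt_iff s).1 hlt
      have hd_le : ∀ t, x ≤ t → stdPhiPDF t - hfun t ≤ 0 := fun t ht =>
        sub_nonpos.2 ((d_le_iff t).2 (sign0 hs.1 (hs.2.trans ht) hgs))
      have hIμε : IntegrableOn (fun t => stdPhiPDF t - hfun t) (Ioi x) :=
        integrable_phi.integrableOn.sub (intOn_h x)
      have hIμc : IntegrableOn (fun t => stdPhiPDF t - hfun t) (Ioc 0 x) := by
        apply MeasureTheory.IntegrableOn.mono_set _ Ioc_subset_Ioi_self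
        exact integrable_phi.integrableOn.sub (intOn_h 0)
      have hsplit : (∫ t in Ioc 0 x, (stdPhiPDF t - hfun t))
          + ∫ t in Ioi x, (stdPhiPDF t - hfun t)
          = ∫ t in Ioi (0:ℝ), (stdPhiPDF t - hfun t) := by
        rw [← MeasureTheory.setIntegral_union (Ioc_disjoint_Ioi le_rfl) measurableSet_Ioi
          hIμc hIμε, Ioc_union_Ioi_eq_Ioi hx]
      have htot : ∫ t in Ioi (0:ℝ), (stdPhiPDF t - hfun t) = 0 := by
        rw [MeasureTheory.integral_sub integrable_phi.integrableOn (intOn_h 0),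
          int_phi_Ioi, int_h_Ioi, L_zero]
        norm_num
      have htail : ∫ t in Ioi x, (stdPhiPDF t - hfun t) ≤ 0 :=
        MeasureTheory.setIntegral_nonpos measurableSet_Ioi (fun t ht => hd_le t (le_of_lt ht))
      rw [intervalIntegral.integral_of_le hx]
      linarith
  have hsub : ∫ t in (0:ℝ)..x, (stdPhiPDF t - hfun t)
      = (∫ t in (0:ℝ)..x, stdPhiPDF t) - ∫ t in (0:ℝ)..x, hfun t :=
    intervalIntegral.integral_sub (integrable_phi.intervalIntegrable)
      (continuous_hfun.intervalIntegrable 0 x)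
  rw [hsub, ← hΦ, ← hL, cdf_zero, L_zero] at key
  linarith

lemma cdf_strict_mono {a b : ℝ} (hab : a < b) : stdPhiCDF a < stdPhiCDF b := by
  have hpos := intervalIntegral.intervalIntegral_pos_of_pos_on
    (integrable_phi.intervalIntegrable (a := a) (b := b)) (fun t _ => phi_pos t) hab
  have h := intervalIntegral.integral_Iic_sub_Iic (μ := volume) (a := a) (b := b)
    integrable_phi.integrableOn integrable_phi.integrableOn
  rw [stdPhiCDF, stdPhiCDF]
  nlinarith [h, hpos]

end NCL

/-- **A logistic lower bound on the normal CDF.** For every `x ≥ 0`,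
`Φ(x) ≥ 1/(1 + exp(−√(8/π)·x))`; equivalently, for every `q ∈ [1/2, 1)`,
`Φ⁻¹(q) ≤ √(π/8)·log(q/(1 − q))` (stated as: any `y` with `Φ(y) = q` satisfies the bound). -/
theorem normal_cdf_logistic_bound :
    (∀ x : ℝ, 0 ≤ x → 1 / (1 + Real.exp (-(Real.sqrt (8 / Real.pi)) * x)) ≤ stdPhiCDF x) ∧
    (∀ q ∈ Set.Ico (1 / 2 : ℝ) 1, ∀ y : ℝ, stdPhiCDF y = q →
      y ≤ Real.sqrt (Real.pi / 8) * Real.log (q / (1 - q))) := by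
  have hpart1 : ∀ x : ℝ, 0 ≤ x →
      1 / (1 + Real.exp (-(Real.sqrt (8 / Real.pi)) * x)) ≤ stdPhiCDF x := by
    intro x hx
    have := NCL.part1 x hx
    simpa [NCL.L, NCL.E, NCL.c, neg_mul] using this
  constructor
  · exact hpart1
  · intro q hq y hy
    set x := Real.sqrt (Real.pi / 8) * Real.log (q / (1 - q)) with hxdef
    have hq1 : 1/2 ≤ q := hq.1
    have hq2 : q < 1 := hq.2
    have hq0 : 0 < q := by linarith
    have h1q : 0 < 1 - q := by linarith
    have hr1 : 1 ≤ q / (1 - q) := (one_le_div h1q).2 (by linarith)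
    have hx : 0 ≤ x := mul_nonneg (Real.sqrt_nonneg _) (Real.log_nonneg hr1)
    have hcs : Real.sqrt (8 / Real.pi) * x = Real.log (q / (1 - q)) := by
      rw [hxdef, ← mul_assoc, ← Real.sqrt_mul (by positivity),
        show 8 / Real.pi * (Real.pi / 8) = 1 by field_simp, Real.sqrt_one, one_mul]
    have hLx : 1 / (1 + Real.exp (-(Real.sqrt (8 / Real.pi)) * x)) = q := by
      rw [neg_mul, hcs, Real.exp_neg, Real.exp_log (by positivity)]
      rw [show (q / (1 - q))⁻¹ = (1 - q) / q from by rw [inv_div]]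
      field_simp
      ring
    have hq_le : q ≤ stdPhiCDF x := hLx ▸ hpart1 x hx
    by_contra hcon
    push_neg at hcon
    have := NCL.cdf_strict_mono hcon
    rw [hy] at this
    linarith
end
end

section
/- Let μ ∈ ℝ, σ > 0, and δ̂ ∈ (0, 0.33]. If 1/2 − δ̂ ≤ Φ(−μ/σ) ≤ 1/2 + δ̂, then |μ|/σ ≤ √(π/8)·log((1/2 + δ̂)/(1/2 − δ̂)) ≤ 1. -/
noncomputable section

open MeasureTheory Real

namespace BMTD

def c : ℝ := Real.sqrt (2 / Real.pi)
lemma c_sq : c ^ 2 = 2 / Real.pi := Real.sq_sqrt (by positivity)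
lemma c_pos : 0 < c := Real.sqrt_pos.mpr (by positivity)
lemma c_lb : 0.7968 ≤ c := by
  have h : (0.7968:ℝ)^2 ≤ 2 / Real.pi := by
    rw [le_div_iff₀ Real.pi_pos]; nlinarith [Real.pi_lt_d2]
  calc (0.7968:ℝ) = Real.sqrt (0.7968^2) := by rw [Real.sqrt_sq]; norm_num
    _ ≤ c := Real.sqrt_le_sqrt h
lemma c_ub : c ≤ 0.7979 := by
  have h : 2 / Real.pi ≤ (0.7979:ℝ)^2 := by
    rw [div_le_iff₀ Real.pi_pos]; nlinarith [Real.pi_gt_d6]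
  calc c ≤ Real.sqrt ((0.7979:ℝ)^2) := Real.sqrt_le_sqrt h
    _ = 0.7979 := by rw [Real.sqrt_sq]; norm_num

lemma cont_pdf : Continuous stdPhiPDF := by
  unfold stdPhiPDF; fun_prop

lemma pdf_nonneg (x : ℝ) : 0 ≤ stdPhiPDF x := by unfold stdPhiPDF; positivity

lemma pdf_fun_eq : stdPhiPDF = fun x => (Real.sqrt (2 * Real.pi))⁻¹ * Real.exp (-(1/2) * x ^ 2) := by
  funext x; unfold stdPhiPDF; ring_nf

lemma integrable_pdf : Integrable stdPhiPDF := by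
  rw [pdf_fun_eq]
  exact (integrable_exp_neg_mul_sq (by norm_num : (0:ℝ) < 1/2)).const_mul _

lemma total : ∫ x, stdPhiPDF x = 1 := by
  rw [pdf_fun_eq, MeasureTheory.integral_const_mul, integral_gaussian]
  have h1 : Real.pi / (1/2) = 2 * Real.pi := by ring
  rw [h1, inv_mul_cancel₀]
  positivity

lemma pdf_even (x : ℝ) : stdPhiPDF (-x) = stdPhiPDF x := by simp [stdPhiPDF]

lemma cdf_zero : stdPhiCDF 0 = 1/2 := by
  have heq : ∫ x in Set.Iic (0:ℝ), stdPhiPDF x = ∫ x in Set.Ioi (0:ℝ), stdPhiPDF x := by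
    have h := integral_comp_neg_Iic (0:ℝ) stdPhiPDF
    simp only [pdf_even, neg_zero] at h
    exact h
  have hadd := intervalIntegral.integral_Iic_add_Ioi (b := (0:ℝ)) (μ := volume)
    integrable_pdf.integrableOn integrable_pdf.integrableOn
  rw [total] at hadd
  unfold stdPhiCDF
  linarith [heq, hadd]

lemma cdf_eq (x : ℝ) : stdPhiCDF x = 1/2 + ∫ s in (0:ℝ)..x, stdPhiPDF s := by
  have h := intervalIntegral.integral_Iic_sub_Iic (μ := volume) (f := stdPhiPDF) (a := (0:ℝ)) (b := x)
    integrable_pdf.integrableOn integrable_pdf.integrableOn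
  have h0 : stdPhiCDF 0 = 1/2 := cdf_zero
  unfold stdPhiCDF at h0 ⊢
  linarith

lemma int_neg (x : ℝ) : ∫ s in (0:ℝ)..(-x), stdPhiPDF s = - ∫ s in (0:ℝ)..x, stdPhiPDF s := by
  have h := intervalIntegral.integral_comp_neg (a := (0:ℝ)) (b := x) (f := stdPhiPDF)
  simp only [pdf_even, neg_zero] at h
  have h2 := intervalIntegral.integral_symm (μ := volume) (f := stdPhiPDF) (-x) 0
  rw [h2, ← h]

lemma exp_quad_lb {u : ℝ} (h0 : 0 ≤ u) : 1 + u + u^2/2 + u^3/6 + u^4/24 ≤ Real.exp u := by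
  have h := Real.sum_le_exp_of_nonneg h0 5
  norm_num [Finset.sum_range_succ, Nat.factorial] at h
  linarith

lemma exp_neg_lb {u : ℝ} (h0 : 0 ≤ u) (h1 : u ≤ 1) :
    1 - u + u^2/2 - u^3/6 - 5*u^4/96 ≤ Real.exp (-u) := by
  have h := Real.exp_bound (x := -u) (by rwa [abs_neg, abs_of_nonneg h0]) (n := 4) (by norm_num)
  rw [abs_neg, abs_of_nonneg h0] at h
  have h2 := (abs_sub_le_iff.1 h).2
  have h3 : ∀ m:ℕ, ((-u)^m : ℝ) = (-1)^m * u^m := fun m => by ring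
  norm_num [Finset.sum_range_succ, Nat.factorial] at h2 ⊢
  linarith

lemma exp_ub {x : ℝ} (h0 : 0 ≤ x) (h1 : x ≤ 1) : Real.exp x ≤ 1 + x + x^2/2 + 2*x^3/9 := by
  have h := Real.exp_bound' h0 h1 (n := 3) (by norm_num)
  norm_num [Finset.sum_range_succ, Nat.factorial] at h
  linarith

lemma two_pdf (t : ℝ) : 2 * stdPhiPDF t = c * Real.exp (-t^2/2) := by
  unfold stdPhiPDF
  have h2 : Real.sqrt (2*Real.pi) > 0 := Real.sqrt_pos.mpr (by positivity)
  have key : c * Real.sqrt (2*Real.pi) = 2 := by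
    rw [c, ← Real.sqrt_mul (by positivity)]
    rw [show 2 / Real.pi * (2*Real.pi) = 4 by field_simp; ring]
    rw [show (4:ℝ) = 2^2 by norm_num, Real.sqrt_sq (by norm_num)]
  have hc : c = 2 / Real.sqrt (2*Real.pi) := by
    rw [eq_div_iff h2.ne']; exact key
  rw [hc]; ring

set_option maxHeartbeats 2000000 in
lemma key_pt {t : ℝ} (h0 : 0 ≤ t) (h1 : t ≤ 1.2) :
    2 * Real.exp (t^2/4) ≤ Real.exp (c*t) + Real.exp (-(c*t)) := by
  set u := c*t with hu
  have hu0 : 0 ≤ u := mul_nonneg c_pos.le h0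
  have hu1 : u ≤ 1 := by nlinarith [c_ub, c_pos]
  have hx0 : (0:ℝ) ≤ t^2/4 := by positivity
  have hx1 : t^2/4 ≤ 1 := by nlinarith
  have e1 := exp_quad_lb hu0
  have e2 := exp_neg_lb hu0 hu1
  have e3 := exp_ub hx0 hx1
  have hπ1 := Real.pi_gt_d2
  have hπ2 := Real.pi_lt_d2
  have hpi : (0:ℝ) < Real.pi := by linarith
  have hu2 : u^2 * Real.pi = 2 * t^2 := by
    rw [hu, mul_pow]; rw [c_sq]; field_simp
  have hu4 : u^4 * Real.pi^2 = 4 * t^4 := by nlinarith [hu2]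
  have ht2 : t^2 ≤ 1.44 := by nlinarith
  have hpi2 : Real.pi^2 ≤ 9.9225 := by nlinarith
  have hC : (128.52:ℝ) ≤ 192*Real.pi - 48*Real.pi^2 := by
    nlinarith [mul_nonneg (sub_nonneg.2 hπ2.le) (by nlinarith : (0:ℝ) ≤ Real.pi - 0.85)]
  have hA : Real.pi^2 * t^2 ≤ 14.2884 := by nlinarith [sq_nonneg t, sq_nonneg Real.pi]
  have main2 : 48*Real.pi^2*t^2 + 6*Real.pi^2*t^4 + (2/3)*Real.pi^2*t^6 + 4*t^4
      ≤ 192*Real.pi*t^2 := by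
    nlinarith [hC, hA, ht2, sq_nonneg t, mul_nonneg (sq_nonneg t) (sq_nonneg t),
      mul_le_mul_of_nonneg_right hA (sq_nonneg t),
      mul_le_mul_of_nonneg_right (mul_le_mul_of_nonneg_right hA (sq_nonneg t)) (sq_nonneg t),
      mul_le_mul_of_nonneg_left ht2 (sq_nonneg t)]
  have hu2b : u^2 * Real.pi^2 = 2 * t^2 * Real.pi := by
    rw [sq Real.pi, ← mul_assoc, hu2]
  have hfin : 0 ≤ (u^2 - (t^2/2 + (t^2/4)^2 + 4*(t^2/4)^3/9 + u^4/96)) * (96*Real.pi^2) := by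
    nlinarith [main2, hu2b, hu4]
  have h96 : (0:ℝ) < 96*Real.pi^2 := by positivity
  have main : t^2/2 + (t^2/4)^2 + 4*(t^2/4)^3/9 + u^4/96 ≤ u^2 := by
    nlinarith [hfin, h96]
  nlinarith [main]

def g (t : ℝ) : ℝ := 2 * (∫ s in (0:ℝ)..t, stdPhiPDF s) - 1 + 2/(Real.exp (2*c*t)+1)

lemma hasDeriv_g (t : ℝ) :
    HasDerivAt g (2 * stdPhiPDF t - 4*c*Real.exp (2*c*t)/(Real.exp (2*c*t)+1)^2) t := by
  have hA : HasDerivAt (fun u => ∫ s in (0:ℝ)..u, stdPhiPDF s) (stdPhiPDF t) t :=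
    (cont_pdf.integral_hasStrictDerivAt 0 t).hasDerivAt
  have hE : HasDerivAt (fun u : ℝ => Real.exp (2*c*u)) (Real.exp (2*c*t) * (2*c)) t := by
    exact HasDerivAt.exp (by simpa using (hasDerivAt_id t).const_mul (2*c))
  have hden : HasDerivAt (fun u : ℝ => Real.exp (2*c*u) + 1) (Real.exp (2*c*t) * (2*c)) t :=
    hE.add_const 1
  have hne : Real.exp (2*c*t) + 1 ≠ 0 := by positivity
  have hdiv := (hasDerivAt_const t (2:ℝ)).div hden hne
  have hsum := ((hA.const_mul 2).sub_const 1).add hdiv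
  have hfun : g = ((fun x => (2 * ∫ s in (0:ℝ)..x, stdPhiPDF s) - 1) + (fun x => (2:ℝ)) / fun u => Real.exp (2*c*u) + 1) := by
    funext x; simp only [g, Pi.add_apply, Pi.div_apply]
  rw [hfun]
  exact hsum.congr_deriv (by ring)

lemma deriv_g_nonneg {t : ℝ} (h0 : 0 ≤ t) (h1 : t ≤ 1.2) :
    0 ≤ 2 * stdPhiPDF t - 4*c*Real.exp (2*c*t)/(Real.exp (2*c*t)+1)^2 := by
  have hkey := key_pt h0 h1
  set E := Real.exp (2*c*t) with hE
  have hEpos : 0 < E := Real.exp_pos _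
  have hE1 : 0 < E + 1 := by linarith
  -- (E+1) ≥ 2 exp(ct + t²/4)
  have step1 : 2 * Real.exp (c*t + t^2/4) ≤ E + 1 := by
    have hmul := mul_le_mul_of_nonneg_left hkey (Real.exp_pos (c*t)).le
    have e1 : Real.exp (c*t) * Real.exp (c*t) = E := by
      rw [← Real.exp_add, hE]; ring_nf
    have e2 : Real.exp (c*t) * Real.exp (-(c*t)) = 1 := by
      rw [← Real.exp_add]; simp
    have e3 : Real.exp (c*t) * Real.exp (t^2/4) = Real.exp (c*t + t^2/4) := by
      rw [← Real.exp_add]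
    nlinarith [hmul, e1, e2, e3]
  -- square it: (E+1)^2 ≥ 4 E exp(t²/2)
  have step2 : 4 * (E * Real.exp (t^2/2)) ≤ (E+1)^2 := by
    have hsq := mul_self_le_mul_self (by positivity : (0:ℝ) ≤ 2*Real.exp (c*t + t^2/4)) step1
    have e4 : (2*Real.exp (c*t + t^2/4)) * (2*Real.exp (c*t + t^2/4))
        = 4 * (E * Real.exp (t^2/2)) := by
      rw [show (2*Real.exp (c*t + t^2/4)) * (2*Real.exp (c*t + t^2/4))
          = 4 * (Real.exp (c*t + t^2/4) * Real.exp (c*t + t^2/4)) by ring,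
        ← Real.exp_add, hE, ← Real.exp_add]
      ring_nf
    rw [e4] at hsq
    nlinarith [hsq]
  -- conclude
  rw [two_pdf, sub_nonneg, div_le_iff₀ (by positivity)]
  have hexp : Real.exp (-t^2/2) * Real.exp (t^2/2) = 1 := by
    rw [← Real.exp_add, show -t^2/2 + t^2/2 = 0 by ring, Real.exp_zero]
  have := mul_le_mul_of_nonneg_left step2 (mul_nonneg c_pos.le (Real.exp_pos (-t^2/2)).le)
  calc 4*c*E = (c * Real.exp (-t^2/2)) * (4 * (E * Real.exp (t^2/2))) := by
        rw [show (c * Real.exp (-t^2/2)) * (4 * (E * Real.exp (t^2/2)))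
            = 4*c*E * (Real.exp (-t^2/2) * Real.exp (t^2/2)) by ring, hexp]; ring
    _ ≤ (c * Real.exp (-t^2/2)) * (E+1)^2 := this

lemma g_zero : g 0 = 0 := by
  unfold g
  simp [intervalIntegral.integral_same]
  norm_num

lemma g_nonneg {t : ℝ} (h0 : 0 ≤ t) (h1 : t ≤ 1.2) : 0 ≤ g t := by
  have hmono : MonotoneOn g (Set.Icc (0:ℝ) 1.2) := by
    apply monotoneOn_of_deriv_nonneg (convex_Icc _ _)
    · exact fun x _ => ((hasDeriv_g x).continuousAt).continuousWithinAt
    · exact fun x _ => ((hasDeriv_g x).differentiableAt).differentiableWithinAt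
    · intro x hx
      rw [interior_Icc] at hx
      rw [(hasDeriv_g x).deriv]
      exact deriv_g_nonneg hx.1.le hx.2.le
  have := hmono (Set.mem_Icc.2 ⟨le_refl 0, by norm_num⟩) (Set.mem_Icc.2 ⟨h0, h1⟩) h0
  rw [g_zero] at this
  exact this

lemma sqrt_pi8 : Real.sqrt (Real.pi/8) * (2*c) = 1 := by
  rw [c, show Real.sqrt (Real.pi/8) * (2*Real.sqrt (2/Real.pi))
      = 2 * (Real.sqrt (Real.pi/8) * Real.sqrt (2/Real.pi)) by ring,
    ← Real.sqrt_mul (by positivity), show Real.pi/8 * (2/Real.pi) = 1/4 by field_simp; ring]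
  rw [show (1/4:ℝ) = (1/2)^2 by norm_num, Real.sqrt_sq (by norm_num)]
  norm_num

lemma endpoint_num : (0.66:ℝ) < 1 - 2/(Real.exp (2*c*1.2)+1) := by
  have h1 : (0.95616:ℝ) ≤ 1.2 * c := by nlinarith [c_lb]
  have h2 : (2.5938:ℝ) ≤ Real.exp (1.2*c) := by
    have h := exp_quad_lb (u := (0.95616:ℝ)) (by norm_num)
    have hmono := Real.exp_le_exp.mpr h1
    norm_num at h
    linarith
  have h3 : (6.72:ℝ) ≤ Real.exp (2*c*1.2) := by
    rw [show 2*c*1.2 = 1.2*c + 1.2*c by ring, Real.exp_add]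
    nlinarith [h2, Real.exp_pos (1.2*c)]
  have h4 : (0:ℝ) < Real.exp (2*c*1.2) + 1 := by positivity
  have h5 : 2/(Real.exp (2*c*1.2)+1) ≤ 2/7.72 := by
    apply div_le_div_of_nonneg_left (by norm_num) (by norm_num)
    linarith
  norm_num at h5 ⊢
  linarith
end BMTD

open BMTD

/-- **Bounded mean-to-deviation ratio.** If `σ > 0`, `δ̂ ∈ (0, 0.33]`, and
`1/2 − δ̂ ≤ Φ(−μ/σ) ≤ 1/2 + δ̂`, then
`|μ|/σ ≤ √(π/8)·log((1/2 + δ̂)/(1/2 − δ̂)) ≤ 1`. -/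
theorem bounded_mean_to_deviation (μ σ δhat : ℝ) (hσ : 0 < σ)
    (hδ0 : 0 < δhat) (hδ : δhat ≤ 0.33)
    (h1 : 1 / 2 - δhat ≤ stdPhiCDF (-μ / σ))
    (h2 : stdPhiCDF (-μ / σ) ≤ 1 / 2 + δhat) :
    |μ| / σ ≤ Real.sqrt (Real.pi / 8) * Real.log ((1 / 2 + δhat) / (1 / 2 - δhat)) ∧
    Real.sqrt (Real.pi / 8) * Real.log ((1 / 2 + δhat) / (1 / 2 - δhat)) ≤ 1 := by
  have hδ' : δhat ≤ 0.33 := hδ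
  norm_num at hδ'
  have hhalf : (0:ℝ) < 1/2 - δhat := by linarith
  have hRpos : (0:ℝ) < (1/2 + δhat) / (1/2 - δhat) := by positivity
  set x := -μ / σ with hx
  have hcdf := cdf_eq x
  set I := ∫ s in (0:ℝ)..x, stdPhiPDF s with hI
  have hIub : I ≤ δhat := by rw [hcdf] at h2; linarith
  have hIlb : -δhat ≤ I := by rw [hcdf] at h1; linarith
  set t := |x| with ht
  have ht0 : 0 ≤ t := abs_nonneg x
  have habs : |μ| / σ = t := by
    rw [ht, hx, abs_div, abs_neg, abs_of_pos hσ]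
  have hAt : (∫ s in (0:ℝ)..t, stdPhiPDF s) ≤ δhat := by
    rcases abs_cases x with ⟨h, _⟩ | ⟨h, _⟩
    · rw [ht, h]; exact hIub
    · rw [ht, h, int_neg]; linarith
  have ht12 : t ≤ 1.2 := by
    by_contra hgt
    push_neg at hgt
    have hsplit := intervalIntegral.integral_add_adjacent_intervals (μ := volume)
      (cont_pdf.intervalIntegrable 0 1.2) (cont_pdf.intervalIntegrable 1.2 t)
    have htail : 0 ≤ ∫ s in (1.2:ℝ)..t, stdPhiPDF s :=
      intervalIntegral.integral_nonneg (by linarith) (fun s _ => pdf_nonneg s)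
    have hg12 := g_nonneg (t := 1.2) (by norm_num) (le_refl _)
    have hnum := endpoint_num
    unfold g at hg12
    have heq : (∫ s in (0:ℝ)..t, stdPhiPDF s)
        = (∫ s in (0:ℝ)..1.2, stdPhiPDF s) + ∫ s in (1.2:ℝ)..t, stdPhiPDF s := hsplit.symm
    rw [heq] at hAt
    linarith
  have hg := g_nonneg ht0 ht12
  unfold g at hg
  set E := Real.exp (2*c*t) with hE
  have hEpos : 0 < E := Real.exp_pos _
  have hE1 : (0:ℝ) < E + 1 := by linarith
  have h5 : (1 - 2*δhat) * (E+1) ≤ 2 := by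
    have h6 : 1 - 2*δhat ≤ 2/(E+1) := by linarith
    exact (le_div_iff₀ hE1).mp h6
  have hER : E ≤ (1/2 + δhat) / (1/2 - δhat) := by
    rw [le_div_iff₀ hhalf]
    nlinarith [h5]
  have hlog : 2*c*t ≤ Real.log ((1/2 + δhat) / (1/2 - δhat)) :=
    (Real.le_log_iff_exp_le hRpos).mpr hER
  have hsqrt := sqrt_pi8
  constructor
  · rw [habs]
    calc t = Real.sqrt (Real.pi/8) * (2*c) * t := by rw [hsqrt]; ring
      _ = Real.sqrt (Real.pi/8) * (2*c*t) := by ring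
      _ ≤ Real.sqrt (Real.pi/8) * Real.log ((1/2 + δhat) / (1/2 - δhat)) :=
          mul_le_mul_of_nonneg_left hlog (Real.sqrt_nonneg _)
  · have hR83 : (1/2 + δhat) / (1/2 - δhat) ≤ 83/17 := by
      rw [div_le_div_iff₀ hhalf (by norm_num)]
      linarith
    have hec : (2.2153:ℝ) ≤ Real.exp c := by
      have h := exp_quad_lb (u := (0.7968:ℝ)) (by norm_num)
      have hmono := Real.exp_le_exp.mpr c_lb
      norm_num at h
      linarith
    have he2c : (83/17:ℝ) ≤ Real.exp (2*c) := by
      rw [show 2*c = c + c by ring, Real.exp_add]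
      nlinarith [hec, Real.exp_pos c]
    have hlogR : Real.log ((1/2 + δhat) / (1/2 - δhat)) ≤ 2*c := by
      rw [Real.log_le_iff_le_exp hRpos]
      linarith
    calc Real.sqrt (Real.pi/8) * Real.log ((1/2 + δhat) / (1/2 - δhat))
        ≤ Real.sqrt (Real.pi/8) * (2*c) := mul_le_mul_of_nonneg_left hlogR (Real.sqrt_nonneg _)
      _ = 1 := hsqrt
end
end
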